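/- Let K be a finite abstract simplicial complex, w : K → (0,∞), φ_w the induced weight, H a hypergraph with ΔH = K, and n ≥ 0. Then the n-th φ_w-weighted embedded homology H_n(H, φ_w; F) is linearly isomorphic to the unweighted embedded homology H_n(H; F). -/

import Mathlib

/-!
Rescale every simplex `σ` of `K` by `c σ = C ^ |σ| * w σ`. Since
`φ_w(σ, σ \ v) * c (σ \ v) = c σ`, this diagonal automorphism of the chains intertwines
`∂^{φ_w}` with the unweighted `∂` on chains supported on `K`, and, being diagonal in the
simplex basis, it maps each `D_m` onto itself. Hence it carries the cycles
`D_n ∩ Ker ∂^{φ_w}` and the boundaries `D_n ∩ ∂^{φ_w} D_{n+1}` onto their unweighted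
counterparts, and so induces an isomorphism of the quotients.
-/

/-- The `φ`-weighted simplicial boundary operator on the free vector space on the
finite subsets of a finite linearly ordered vertex type `V`:
`∂^φ σ = Σ_{v ∈ σ} (−1)^{idx σ v} φ(σ, σ \ v) (σ \ v)`, with `∂^φ = 0` on `0`-simplices. -/
noncomputable def wbd (𝕜 : Type*) [RCLike 𝕜] {V : Type*} [Fintype V] [LinearOrder V]
    (phi : Finset V → Finset V → 𝕜) :
    (Finset V → 𝕜) →ₗ[𝕜] (Finset V → 𝕜) :=
  ∑ σ : Finset V,
    LinearMap.toSpanSingleton 𝕜 _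
        (if 2 ≤ σ.card then
            σ.sum fun v =>
              ((-1 : 𝕜) ^ (σ.filter (· < v)).card * phi σ (σ.erase v)) •
                (Pi.single (σ.erase v) (1 : 𝕜) : Finset V → 𝕜)
          else 0) ∘ₗ
      LinearMap.proj σ

/-- The span of the `m`-vertex hyperedges of `H` inside the chains. -/
noncomputable def hspan (𝕜 : Type*) [RCLike 𝕜] {V : Type*} [Fintype V] [LinearOrder V]
    (H : Set (Finset V)) (m : ℕ) : Submodule 𝕜 (Finset V → 𝕜) :=
  Submodule.span 𝕜 {f | ∃ σ ∈ H, σ.card = m ∧ f = (Pi.single σ 1 : Finset V → 𝕜)}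

section EmbeddedHomology

variable {R M M' : Type*} [Ring R] [AddCommGroup M] [Module R M] [AddCommGroup M'] [Module R M']

abbrev embeddedHomology (d : M →ₗ[R] M) (D₁ D₂ : Submodule R M) : Type _ :=
  ↥(D₁ ⊓ LinearMap.ker d) ⧸ (D₁ ⊓ D₂.map d).comap (D₁ ⊓ LinearMap.ker d).subtype

def Submodule.quotientComapSubtypeEquiv (e : M ≃ₗ[R] M') {A B : Submodule R M}
    {A' B' : Submodule R M'} (hA : A.map e.toLinearMap = A') (hB : B.map e.toLinearMap = B') :
    (A ⧸ B.comap A.subtype) ≃ₗ[R] (A' ⧸ B'.comap A'.subtype) :=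
  Submodule.Quotient.equiv _ _ ((e.submoduleMap A).trans (LinearEquiv.ofEq _ _ hA)) <| by
    subst hA hB
    ext ⟨y, hy⟩
    simp [Submodule.mem_map_equiv]

variable {e : M ≃ₗ[R] M'} {d : M →ₗ[R] M} {d' : M' →ₗ[R] M'}

theorem Submodule.map_inf_ker_of_conj {D : Submodule R M} {D' : Submodule R M'}
    (hD : D.map e.toLinearMap = D') (hconj : ∀ x ∈ D, e (d x) = d' (e x)) :
    (D ⊓ LinearMap.ker d).map e.toLinearMap = D' ⊓ LinearMap.ker d' := by
  subst hD
  ext y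
  simp only [Submodule.mem_map_equiv, Submodule.mem_inf, LinearMap.mem_ker]
  refine and_congr_right fun hy => ?_
  rw [← e.map_eq_zero_iff, hconj _ hy, e.apply_symm_apply]

theorem Submodule.map_inf_map_of_conj {D₁ D₂ : Submodule R M} {D₁' D₂' : Submodule R M'}
    (h₁ : D₁.map e.toLinearMap = D₁') (h₂ : D₂.map e.toLinearMap = D₂')
    (hconj : ∀ x ∈ D₂, e (d x) = d' (e x)) :
    (D₁ ⊓ D₂.map d).map e.toLinearMap = D₁' ⊓ D₂'.map d' := by
  have hmap : (D₂.map d).map e.toLinearMap = (D₂.map e.toLinearMap).map d' := by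
    ext y
    simp only [Submodule.mem_map]
    constructor
    · rintro ⟨_, ⟨x, hx, rfl⟩, rfl⟩
      exact ⟨e x, ⟨x, hx, rfl⟩, (hconj x hx).symm⟩
    · rintro ⟨_, ⟨x, hx, rfl⟩, rfl⟩
      exact ⟨d x, ⟨x, hx, rfl⟩, hconj x hx⟩
  rw [Submodule.map_inf _ e.injective, ← h₁, ← h₂, hmap]

def embeddedHomology.equivOfConj (e : M ≃ₗ[R] M') {D₁ D₂ : Submodule R M}
    {D₁' D₂' : Submodule R M'} (h₁ : D₁.map e.toLinearMap = D₁') (h₂ : D₂.map e.toLinearMap = D₂')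
    (hconj₁ : ∀ x ∈ D₁, e (d x) = d' (e x)) (hconj₂ : ∀ x ∈ D₂, e (d x) = d' (e x)) :
    embeddedHomology d D₁ D₂ ≃ₗ[R] embeddedHomology d' D₁' D₂' :=
  Submodule.quotientComapSubtypeEquiv e (Submodule.map_inf_ker_of_conj h₁ hconj₁)
    (Submodule.map_inf_map_of_conj h₁ h₂ hconj₂)

end EmbeddedHomology

def scaleEquiv {ι K : Type*} [Field K] (c : ι → K) (hc : ∀ i, c i ≠ 0) : (ι → K) ≃ₗ[K] (ι → K) :=
  LinearEquiv.piCongrRight fun i => LinearEquiv.smulOfNeZero K K (c i) (hc i)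

theorem scaleEquiv_single {ι K : Type*} [Field K] [DecidableEq ι] (c : ι → K)
    (hc : ∀ i, c i ≠ 0) (i : ι) (a : K) :
    scaleEquiv c hc (Pi.single i a) = c i • Pi.single i a := by
  ext j
  rcases eq_or_ne j i with rfl | hji
  · simp [scaleEquiv]
  · simp [scaleEquiv, Pi.single_eq_of_ne hji]

section Chains

variable {𝕜 : Type*} [RCLike 𝕜] {V : Type*} [Fintype V] [LinearOrder V]

theorem wbd_single (φ : Finset V → Finset V → 𝕜) (σ : Finset V) :
    wbd 𝕜 φ (Pi.single σ 1) =
      if 2 ≤ σ.card then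
        σ.sum fun v =>
          ((-1 : 𝕜) ^ (σ.filter (· < v)).card * φ σ (σ.erase v)) •
            (Pi.single (σ.erase v) (1 : 𝕜) : Finset V → 𝕜)
      else 0 := by
  rw [wbd, LinearMap.sum_apply, Finset.sum_eq_single σ]
  · simp
  · intro τ _ hτ
    simp [Pi.single_eq_of_ne hτ]
  · simp

theorem map_scaleEquiv_hspan {c : Finset V → 𝕜} (hc : ∀ σ, c σ ≠ 0) (H : Set (Finset V))
    (m : ℕ) : (hspan 𝕜 H m).map (scaleEquiv c hc).toLinearMap = hspan 𝕜 H m := by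
  refine le_antisymm ?_ ?_
  · rw [hspan, Submodule.map_span_le]
    rintro _ ⟨σ, hσ, hcard, rfl⟩
    rw [LinearEquiv.coe_coe, scaleEquiv_single]
    exact Submodule.smul_mem _ _ (Submodule.subset_span ⟨σ, hσ, hcard, rfl⟩)
  · rw [hspan, Submodule.span_le]
    rintro _ ⟨σ, hσ, hcard, rfl⟩
    refine ⟨(c σ)⁻¹ • Pi.single σ 1,
      Submodule.smul_mem _ _ (Submodule.subset_span ⟨σ, hσ, hcard, rfl⟩), ?_⟩
    rw [LinearEquiv.coe_coe, map_smul, scaleEquiv_single, smul_smul, inv_mul_cancel₀ (hc σ),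
      one_smul]

theorem scaleEquiv_wbd_single {φ ψ : Finset V → Finset V → 𝕜} {c : Finset V → 𝕜}
    (hc : ∀ σ, c σ ≠ 0) {σ : Finset V}
    (h : 2 ≤ σ.card → ∀ v ∈ σ, φ σ (σ.erase v) * c (σ.erase v) = c σ * ψ σ (σ.erase v)) :
    scaleEquiv c hc (wbd 𝕜 φ (Pi.single σ 1)) = wbd 𝕜 ψ (scaleEquiv c hc (Pi.single σ 1)) := by
  rw [scaleEquiv_single, map_smul, wbd_single, wbd_single]
  split_ifs with h2
  · rw [map_sum, Finset.smul_sum]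
    refine Finset.sum_congr rfl fun v hv => ?_
    rw [map_smul, scaleEquiv_single, smul_smul, smul_smul, mul_assoc, h h2 v hv]
    ring_nf
  · simp

theorem scaleEquiv_wbd_of_mem_hspan {φ ψ : Finset V → Finset V → 𝕜} {c : Finset V → 𝕜}
    (hc : ∀ σ, c σ ≠ 0) {H : Set (Finset V)}
    (h : ∀ σ ∈ H, 2 ≤ σ.card → ∀ v ∈ σ,
      φ σ (σ.erase v) * c (σ.erase v) = c σ * ψ σ (σ.erase v))
    {m : ℕ} {x : Finset V → 𝕜} (hx : x ∈ hspan 𝕜 H m) :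
    scaleEquiv c hc (wbd 𝕜 φ x) = wbd 𝕜 ψ (scaleEquiv c hc x) := by
  induction hx using Submodule.span_induction with
  | mem f hf =>
    obtain ⟨σ, hσ, -, rfl⟩ := hf
    exact scaleEquiv_wbd_single hc (h σ hσ)
  | zero => simp
  | add a b _ _ ha hb => simp only [map_add, ha, hb]
  | smul r a _ ha => simp only [map_smul, ha]

end Chains

section Weights

variable {V : Type*} {K : Set (Finset V)} {w : Finset V → ℝ} {C : ℝ}

open Classical in
noncomputable def simplexScale (K : Set (Finset V)) (C : ℝ) (w : Finset V → ℝ)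
    (σ : Finset V) : ℝ :=
  if σ ∈ K then C ^ σ.card * w σ else 1

theorem simplexScale_ne_zero (hw : ∀ s ∈ K, 0 < w s) (hC : C ≠ 0) (σ : Finset V) :
    simplexScale K C w σ ≠ 0 := by
  unfold simplexScale
  split_ifs with hσ
  · exact mul_ne_zero (pow_ne_zero _ hC) (hw σ hσ).ne'
  · exact one_ne_zero

theorem weight_mul_simplexScale_erase [DecidableEq V]
    (hdown : ∀ s ∈ K, ∀ t ⊆ s, t.Nonempty → t ∈ K) (hw : ∀ s ∈ K, 0 < w s)
    {σ : Finset V} (hσ : σ ∈ K) (h2 : 2 ≤ σ.card) {v : V} (hv : v ∈ σ) :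
    C * w σ / w (σ.erase v) * simplexScale K C w (σ.erase v) = simplexScale K C w σ := by
  have hcard : (σ.erase v).card + 1 = σ.card := Finset.card_erase_add_one hv
  have herase : σ.erase v ∈ K :=
    hdown σ hσ _ (σ.erase_subset v) (Finset.card_pos.mp (by omega))
  have hw' := (hw _ herase).ne'
  simp only [simplexScale, if_pos hσ, if_pos herase, ← hcard]
  field_simp
  ring

end Weights

theorem stmt19_general {𝕜 V : Type*} [RCLike 𝕜] [Fintype V] [LinearOrder V]
    (K : Set (Finset V))
    (hdown : ∀ s ∈ K, ∀ t ⊆ s, t.Nonempty → t ∈ K)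
    (w : Finset V → ℝ) (hw : ∀ s ∈ K, 0 < w s)
    (C : ℝ) (hC : 0 < C)
    (H : Set (Finset V)) (hH : H ⊆ K)
    (n : ℕ) :
    Nonempty
      ((↥(hspan 𝕜 H (n + 1) ⊓
            LinearMap.ker (wbd 𝕜 fun σ τ => ((C * w σ / w τ : ℝ) : 𝕜))) ⧸
          ((hspan 𝕜 H (n + 1) ⊓
              Submodule.map (wbd 𝕜 fun σ τ => ((C * w σ / w τ : ℝ) : 𝕜))
                (hspan 𝕜 H (n + 2))).comap
            (hspan 𝕜 H (n + 1) ⊓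
              LinearMap.ker (wbd 𝕜 fun σ τ => ((C * w σ / w τ : ℝ) : 𝕜))).subtype))
        ≃ₗ[𝕜]
       (↥(hspan 𝕜 H (n + 1) ⊓ LinearMap.ker (wbd 𝕜 fun _ _ => (1 : 𝕜))) ⧸
          ((hspan 𝕜 H (n + 1) ⊓
              Submodule.map (wbd 𝕜 fun _ _ => (1 : 𝕜)) (hspan 𝕜 H (n + 2))).comap
            (hspan 𝕜 H (n + 1) ⊓
              LinearMap.ker (wbd 𝕜 fun _ _ => (1 : 𝕜))).subtype))) := by
  let c : Finset V → 𝕜 := fun σ => (simplexScale K C w σ : 𝕜)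
  have hc : ∀ σ, c σ ≠ 0 := fun σ => RCLike.ofReal_ne_zero.mpr (simplexScale_ne_zero hw hC.ne' σ)
  have hconj (m : ℕ) : ∀ x ∈ hspan 𝕜 H m,
      scaleEquiv c hc (wbd 𝕜 (fun σ τ => ((C * w σ / w τ : ℝ) : 𝕜)) x) =
        wbd 𝕜 (fun _ _ => 1) (scaleEquiv c hc x) := fun _ hx =>
    scaleEquiv_wbd_of_mem_hspan hc (fun σ hσ h2 v hv => by
      simp only [c, mul_one, ← RCLike.ofReal_mul,
        weight_mul_simplexScale_erase hdown hw (hH hσ) h2 hv]) hx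
  exact ⟨embeddedHomology.equivOfConj (scaleEquiv c hc) (map_scaleEquiv_hspan hc H _)
    (map_scaleEquiv_hspan hc H _) (hconj _) (hconj _)⟩

/-- the `n`-th `φ_w`-weighted embedded homology
`(D_n ∩ Ker ∂_n^{φ_w}) / (D_n ∩ ∂_{n+1}^{φ_w}(D_{n+1}))` of a hypergraph `H` is
linearly isomorphic to the unweighted embedded homology
`(D_n ∩ Ker ∂_n) / (D_n ∩ ∂_{n+1}(D_{n+1}))`, where `φ_w(σ,τ) = C·w(σ)/w(τ)` for a
positive evaluation `w` on `K = ΔH` (`C > 0` constant), the unweighted boundary being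
the one for the constant weight `1`, and `D_m` the span of the `m`-hyperedges of `H`. -/
theorem stmt19 {𝕜 V : Type*} [RCLike 𝕜] [Fintype V] [LinearOrder V]
    (K : Set (Finset V))
    (hne : ∀ s ∈ K, s.Nonempty)
    (hdown : ∀ s ∈ K, ∀ t ⊆ s, t.Nonempty → t ∈ K)
    (w : Finset V → ℝ) (hw : ∀ s ∈ K, 0 < w s)
    (C : ℝ) (hC : 0 < C)
    (H : Set (Finset V)) (hH : H ⊆ K)
    (hDelta : K = {t | t.Nonempty ∧ ∃ s ∈ H, t ⊆ s})
    (n : ℕ) :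
    Nonempty
      ((↥(hspan 𝕜 H (n + 1) ⊓
            LinearMap.ker (wbd 𝕜 fun σ τ => ((C * w σ / w τ : ℝ) : 𝕜))) ⧸
          ((hspan 𝕜 H (n + 1) ⊓
              Submodule.map (wbd 𝕜 fun σ τ => ((C * w σ / w τ : ℝ) : 𝕜))
                (hspan 𝕜 H (n + 2))).comap
            (hspan 𝕜 H (n + 1) ⊓
              LinearMap.ker (wbd 𝕜 fun σ τ => ((C * w σ / w τ : ℝ) : 𝕜))).subtype))
        ≃ₗ[𝕜]
       (↥(hspan 𝕜 H (n + 1) ⊓ LinearMap.ker (wbd 𝕜 fun _ _ => (1 : 𝕜))) ⧸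
          ((hspan 𝕜 H (n + 1) ⊓
              Submodule.map (wbd 𝕜 fun _ _ => (1 : 𝕜)) (hspan 𝕜 H (n + 2))).comap
            (hspan 𝕜 H (n + 1) ⊓
              LinearMap.ker (wbd 𝕜 fun _ _ => (1 : 𝕜))).subtype))) :=
  stmt19_general K hdown w hw C hC H hH n
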